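/- For an integer sequence n = (n_1, ..., n_k): s^{(\overleftarrow{n}, n)}_{2k+1}(t) = (-1)^k v^n_k(t) v^n_k(-t), where v^n_k(t) = s^n_{k+1}(t) - s^{\sigma(n)}_k(t), \sigma(n) = (n_2, ..., n_k), and \overleftarrow{n} = (n_k, ..., n_1). -/
import Mathlib


/-- n-Chebyshev polynomials: s 0 = 0, s 1 = 1, s_{k+2}(t) = n_{k+1} t s_{k+1}(t) - s_k(t)
(0-indexed sequence: the 1-indexed entry n_i is `n (i-1)`). -/
def sChe (n : ℕ → ℤ) : ℕ → ℂ → ℂ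
  | 0, _ => 0
  | 1, _ => 1
  | k + 2, t => (n k : ℂ) * t * sChe n (k + 1) t - sChe n k t

theorem sChe_rec (n : ℕ → ℤ) (j : ℕ) (t : ℂ) :
    sChe n (j + 2) t = (n j : ℂ) * t * sChe n (j + 1) t - sChe n j t := rfl

theorem sChe_congr (t : ℂ) : ∀ (j : ℕ) (m m' : ℕ → ℤ), (∀ i, i + 2 ≤ j → m i = m' i) →
    sChe m j t = sChe m' j t
  | 0, m, m', _ => rfl
  | 1, m, m', _ => rfl
  | j + 2, m, m', h => by
      simp only [sChe]
      rw [sChe_congr t (j+1) m m' (fun i hi => h i (by omega)),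
          sChe_congr t j m m' (fun i hi => h i (by omega)), h j (by omega)]

theorem sChe_neg (n : ℕ → ℤ) (t : ℂ) : ∀ j, sChe n j (-t) = (-1 : ℂ)^(j+1) * sChe n j t
  | 0 => by simp [sChe]
  | 1 => by simp [sChe]
  | j + 2 => by
      simp only [sChe]
      rw [sChe_neg n t (j+1), sChe_neg n t j]
      ring

theorem sChe_split (m : ℕ → ℤ) (a : ℕ) (t : ℂ) : ∀ j,
    sChe m (a + j + 1) t =
      sChe m (a + 1) t * sChe (fun i => m (a + i)) (j + 1) t
        - sChe m a t * sChe (fun i => m (a + 1 + i)) j t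
  | 0 => by simp [sChe]
  | 1 => by
      show sChe m (a + 2) t = _
      simp only [sChe]
      ring
  | j + 2 => by
      have h1 := sChe_split m a t (j + 1)
      have h0 := sChe_split m a t j
      have e : a + (j + 2) + 1 = (a + j + 1) + 2 := by omega
      rw [e]
      simp only [sChe] at h1 h0 ⊢
      simp only [show a + (j + 1) = a + j + 1 from by omega,
        show a + 1 + j = a + j + 1 from by omega] at h1 h0 ⊢
      linear_combination ((m (a + j + 1) : ℂ) * t) * h1 - h0

theorem sChe_headrec (n : ℕ → ℤ) (t : ℂ) : ∀ j,
    sChe n (j + 2) t =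
      (n 0 : ℂ) * t * sChe (fun i => n (i + 1)) (j + 1) t - sChe (fun i => n (i + 2)) j t
  | 0 => by simp [sChe]
  | 1 => by simp only [sChe]; ring
  | j + 2 => by
      have h1 := sChe_headrec n t (j + 1)
      have h0 := sChe_headrec n t j
      simp only [sChe] at h1 h0 ⊢
      simp only [show j + 1 + 1 = j + 2 from by omega] at h1 h0 ⊢
      linear_combination ((n (j + 2) : ℂ) * t) * h1 - h0

theorem sChe_rev (t : ℂ) : ∀ (k : ℕ) (n : ℕ → ℤ),
    sChe (fun i => n (k - 1 - i)) (k + 1) t = sChe n (k + 1) t ∧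
    sChe (fun i => n (k - 1 - i)) k t = sChe (fun i => n (i + 1)) k t
  | 0, n => by constructor <;> rfl
  | k + 1, n => by
      have IH := sChe_rev t k (fun i => n (i + 1))
      have hcongr : ∀ j, j ≤ k + 1 →
          sChe (fun i => n (k + 1 - 1 - i)) j t =
          sChe (fun i => n (k - 1 - i + 1)) j t := by
        intro j hj
        apply sChe_congr
        intro i hi
        congr 1
        omega
      constructor
      · show sChe (fun i => n (k + 1 - 1 - i)) (k + 2) t = sChe n (k + 2) t
        rw [sChe_rec, hcongr (k + 1) le_rfl, hcongr k (by omega), IH.1, IH.2,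
          sChe_headrec n t k]
        norm_num [show k + 1 - 1 - k = 0 from by omega]
      · rw [hcongr (k + 1) le_rfl, IH.1]

theorem sChe_reverse_append_v (n : ℕ → ℤ) (k : ℕ) (t : ℂ) :
    sChe (fun i => if i < k then n (k - 1 - i) else n (i - k)) (2 * k + 1) t =
      (-1 : ℂ) ^ k *
        ((sChe n (k + 1) t - sChe (fun j => n (j + 1)) k t) *
          (sChe n (k + 1) (-t) - sChe (fun j => n (j + 1)) k (-t))) := by
  set m : ℕ → ℤ := fun i => if i < k then n (k - 1 - i) else n (i - k) with hm
  have e : 2 * k + 1 = k + k + 1 := by omega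
  rw [e, sChe_split m k t k]
  have hc1 : sChe (fun i => m (k + i)) (k + 1) t = sChe n (k + 1) t := by
    apply sChe_congr
    intro i hi
    simp only [hm]
    rw [if_neg (by omega)]
    congr 1
    omega
  have hc2 : sChe (fun i => m (k + 1 + i)) k t = sChe (fun j => n (j + 1)) k t := by
    apply sChe_congr
    intro i hi
    simp only [hm]
    rw [if_neg (by omega)]
    congr 1
    omega
  have hr1 : sChe m (k + 1) t = sChe n (k + 1) t := by
    rw [sChe_congr t (k + 1) m (fun i => n (k - 1 - i)) ?_]
    · exact (sChe_rev t k n).1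
    · intro i hi
      simp only [hm]
      rw [if_pos (by omega)]
  have hr2 : sChe m k t = sChe (fun j => n (j + 1)) k t := by
    rw [sChe_congr t k m (fun i => n (k - 1 - i)) ?_]
    · exact (sChe_rev t k n).2
    · intro i hi
      simp only [hm]
      rw [if_pos (by omega)]
  rw [hc1, hc2, hr1, hr2, sChe_neg n t (k + 1), sChe_neg (fun j => n (j + 1)) t k]
  have h : ((-1 : ℂ)) ^ k * (-1 : ℂ) ^ k = 1 := by
    rw [← pow_add]
    exact Even.neg_one_pow ⟨k, rfl⟩
  linear_combination
    (-(sChe n (k + 1) t ^ 2 - sChe (fun j => n (j + 1)) k t ^ 2)) * h
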